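/- arXiv:1603.07924 — 2 statements merged into one kernel-verified Lean document; each statement's English description precedes it below -/
import Mathlib

section
/- A k-testable regular language, characterized by finite sets of allowed prefixes, suffixes, and infixes of length at most k, is identifiable in the limit from positive examples: the learner that collects all observed k-length substrings (and shorter prefixes/suffixes) of the presented strings converges after finitely many examples to a hypothesis generating exactly the target language, for any enumeration of the target language. -/
/-
Over a finite alphabet there are only finitely many k-signatures, so the signatures of the
presented strings E 0, E 1, … all occur among those of E 0, …, E N for some N. From then on the
hypothesis is the union of the signature classes of all strings of L, which is L itself because
L is a union of signature classes.
-/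

/-- The k-signature of a string: its prefix of length k-1, its suffix of
length k-1, and its set of infixes of length k. -/
def kSig {α : Type} (k : ℕ) (w : List α) :
    List α × List α × Set (List α) :=
  (w.take (k - 1), w.drop (w.length - (k - 1)),
    {u | u.length = k ∧ u <:+: w})

theorem Function.exists_bound_forall_exists_le_eq_of_finite_range {β : Type*} {g : ℕ → β}
    (h : (Set.range g).Finite) : ∃ N, ∀ j, ∃ i ≤ N, g i = g j := by
  obtain ⟨N, hN⟩ := (h.image (Function.invFun g)).bddAbove
  exact ⟨N, fun j => ⟨Function.invFun g (g j), hN ⟨g j, ⟨j, rfl⟩, rfl⟩,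
    Function.invFun_eq ⟨j, rfl⟩⟩⟩

theorem finite_range_kSig {α : Type} [Finite α] (k : ℕ) :
    (Set.range (kSig (α := α) k)).Finite := by
  have hfix : {l : List α | l.length ≤ k - 1}.Finite := List.finite_length_le α (k - 1)
  have hinfix : (𝒫 {u : List α | u.length = k}).Finite :=
    (List.finite_length_eq α k).powerset
  refine (hfix.prod (hfix.prod hinfix)).subset ?_
  rintro _ ⟨w, rfl⟩
  refine ⟨?_, ?_, fun u hu => hu.1⟩
  · simp [kSig]
  · simp only [kSig, Set.mem_ofPred_eq, List.length_drop]
    omega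

/-- a k-testable language (membership determined by the
k-signature) over a finite alphabet is identifiable in the limit from positive
examples by collecting observed signatures. -/
theorem stmt_6 {α : Type} [Fintype α] (k : ℕ) (L : Set (List α))
    (htest : ∀ v w : List α, kSig k v = kSig k w → (v ∈ L ↔ w ∈ L))
    (E : ℕ → List α) (hE : Set.range E = L) :
    ∃ N : ℕ, ∀ n ≥ N,
      {w : List α | ∃ i ≤ n, kSig k w = kSig k (E i)} = L := by
  obtain ⟨N, hN⟩ := Function.exists_bound_forall_exists_le_eq_of_finite_range
    ((finite_range_kSig k).subset (Set.range_comp_subset_range E (kSig k)))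
  refine ⟨N, fun n hn => Set.Subset.antisymm ?_ ?_⟩
  · rintro w ⟨i, -, hsig⟩
    exact (htest w (E i) hsig).mpr (hE ▸ Set.mem_range_self i)
  · rw [← hE]
    rintro _ ⟨j, rfl⟩
    obtain ⟨i, hiN, hsig⟩ := hN j
    exact ⟨i, hiN.trans hn, hsig.symm⟩
end

section
/- The class of all regular languages over a two-letter alphabet is not identifiable in the limit from positive examples only: for any learner there exists a regular language L and an enumeration of L on which the learner fails to converge to a correct hypothesis. -/
/-!
Gold's argument. A learner identifying each finite language `L k` of words of length at most `k`
is fed a text for `⋃ k, L k` built in stages: once `L k` has been enumerated, a fixed word of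
`L k` is repeated until the learner guesses `L k`, which it must do because that padded text is
a text for `L k`; then the construction passes to `L (k + 1)`. On the resulting text for the
union the learner guesses a finite language infinitely often, so it never settles on the union,
which is regular too.
-/

open Filter

section GoldTheorem

variable {α : Type*}

def ConvergesTo (learner : List α → Set α) (E : ℕ → α) (L : Set α) : Prop :=
  ∃ N, ∀ n ≥ N, learner ((List.range n).map E) = L

def IdentifiesInTheLimit (learner : List α → Set α) (L : Set α) : Prop :=
  ∀ E : ℕ → α, Set.range E = L → ConvergesTo learner E L

theorem map_range_getD_add (σ : List α) (x : α) (n : ℕ) :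
    (List.range (σ.length + n)).map (σ.getD · x) = σ ++ List.replicate n x := by
  refine List.ext_getElem (by simp) fun i h _ => ?_
  simp only [List.getElem_map, List.getElem_range, List.getElem_append, List.getElem_replicate]
  split_ifs with hi
  · exact List.getD_eq_getElem _ _ hi
  · exact List.getD_eq_default _ _ (not_lt.1 hi)

theorem range_getD (σ : List α) (x : α) : Set.range (σ.getD · x) = insert x {y | y ∈ σ} := by
  ext y
  constructor
  · rintro ⟨i, rfl⟩
    rcases lt_or_ge i σ.length with hi | hi
    · right
      show σ.getD i x ∈ σ
      rw [List.getD_eq_getElem _ _ hi]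
      exact List.getElem_mem hi
    · exact .inl (List.getD_eq_default _ _ hi)
  · rintro (rfl | hy)
    · exact ⟨σ.length, List.getD_eq_default _ _ le_rfl⟩
    · obtain ⟨i, hi, rfl⟩ := List.getElem_of_mem hy
      exact ⟨i, List.getD_eq_getElem _ _ hi⟩

variable {learner : List α → Set α} {L : Set α}

theorem IdentifiesInTheLimit.eventually_append_replicate (hL : IdentifiesInTheLimit learner L)
    {σ : List α} (hσ : ∀ y, y ∈ σ ↔ y ∈ L) {x : α} (hx : x ∈ L) :
    ∀ᶠ n in atTop, learner (σ ++ List.replicate n x) = L := by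
  have hrange : Set.range (σ.getD · x) = L := by
    rw [range_getD]
    ext y
    simp only [Set.mem_insert_iff, Set.mem_ofPred_eq, hσ]
    exact or_iff_right_of_imp (· ▸ hx)
  obtain ⟨N, hN⟩ := hL _ hrange
  exact eventually_atTop.2 ⟨N, fun n hn => map_range_getD_add σ x n ▸ hN _ (by omega)⟩

theorem IdentifiesInTheLimit.exists_append_learner_eq (hL : IdentifiesInTheLimit learner L)
    (hfin : L.Finite) (hne : L.Nonempty) {σ : List α} (hσ : ∀ y ∈ σ, y ∈ L) :
    ∃ τ, τ ≠ [] ∧ (∀ y, y ∈ σ ++ τ ↔ y ∈ L) ∧ learner (σ ++ τ) = L := by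
  obtain ⟨x, hx⟩ := hne
  set ℓ := hfin.toFinset.toList
  have hσℓ : ∀ y, y ∈ σ ++ ℓ ↔ y ∈ L := fun y => by
    simp only [List.mem_append, ℓ, Finset.mem_toList, Set.Finite.mem_toFinset]
    exact or_iff_right_of_imp (hσ y)
  obtain ⟨n, hlearn, hn⟩ :=
    ((hL.eventually_append_replicate hσℓ hx).and (eventually_ge_atTop 1)).exists
  refine ⟨ℓ ++ List.replicate n x, by simp; omega, fun y => ?_, by simpa using hlearn⟩
  rw [← List.append_assoc, List.mem_append, hσℓ, List.mem_replicate]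
  exact or_iff_left_of_imp fun h => h.2 ▸ hx

theorem exists_map_range_eq_of_isPrefix {p : ℕ → List α} (hp : ∀ k, p k <+: p (k + 1))
    (hlen : ∀ k, k ≤ (p k).length) :
    ∃ E : ℕ → α, (∀ k, (List.range (p k).length).map E = p k) ∧
      Set.range E = ⋃ k, {y | y ∈ p k} := by
  have hchain : ∀ j k, j ≤ k → p j <+: p k := fun j k hjk => by
    induction k, hjk using Nat.le_induction with
    | base => exact List.prefix_refl _
    | succ k _ ih => exact ih.trans (hp k)
  let E i := (p (i + 1))[i]'(hlen (i + 1))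
  have hE : ∀ k i (hi : i < (p k).length), E i = (p k)[i] := fun k i hi => by
    rcases le_total (i + 1) k with h | h
    · exact (hchain _ _ h).getElem _
    · exact ((hchain _ _ h).getElem hi).symm
  have hmap : ∀ k, (List.range (p k).length).map E = p k := fun k =>
    List.ext_getElem (by simp) fun i h _ => by simpa using hE k i (by simpa using h)
  refine ⟨E, hmap, Set.ext fun y => ⟨?_, ?_⟩⟩
  · rintro ⟨i, rfl⟩
    exact Set.mem_iUnion.2 ⟨i + 1, List.getElem_mem _⟩
  · rintro ⟨_, ⟨k, rfl⟩, hy⟩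
    obtain ⟨i, hi, rfl⟩ := List.getElem_of_mem hy
    exact ⟨i, hE k i hi⟩

theorem not_identifiesInTheLimit_iUnion {L : ℕ → Set α} (hmono : Monotone L)
    (hfin : ∀ k, (L k).Finite) (hne : ∀ k, (L k).Nonempty) (hproper : ∀ k, L k ≠ ⋃ j, L j)
    (hid : ∀ k, IdentifiesInTheLimit learner (L k)) :
    ¬ IdentifiesInTheLimit learner (⋃ k, L k) := by
  intro hU
  choose! τ hτne hτmem hτlearn using
    fun k σ (hσ : ∀ y ∈ σ, y ∈ L k) => (hid k).exists_append_learner_eq (hfin k) (hne k) hσ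
  -- `p (k + 1)` enumerates `L k` and makes the learner guess `L k`.
  let p : ℕ → List α := fun k => Nat.rec [] (fun k σ => σ ++ τ k σ) k
  have hsub : ∀ k, ∀ y ∈ p k, y ∈ L k := by
    intro k
    induction k with
    | zero => simp [p]
    | succ k ih => exact fun y hy => hmono k.le_succ ((hτmem k (p k) ih y).1 hy)
  have hmem (k : ℕ) : ∀ y, y ∈ p (k + 1) ↔ y ∈ L k := hτmem k (p k) (hsub k)
  have hlearn (k : ℕ) : learner (p (k + 1)) = L k := hτlearn k (p k) (hsub k)
  have hlen : ∀ k, k ≤ (p k).length := by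
    intro k
    induction k with
    | zero => exact Nat.zero_le _
    | succ k ih =>
      have := List.length_pos_iff.2 (hτne k (p k) (hsub k))
      show k + 1 ≤ (p k ++ τ k (p k)).length
      rw [List.length_append]
      omega
  obtain ⟨E, hEp, hErange⟩ :=
    exists_map_range_eq_of_isPrefix (fun k => List.prefix_append (p k) (τ k (p k))) hlen
  have hrange : Set.range E = ⋃ k, L k := by
    rw [hErange]
    ext y
    simp only [Set.mem_iUnion]
    exact ⟨fun ⟨k, hy⟩ => ⟨k, hsub k y hy⟩, fun ⟨k, hy⟩ => ⟨k + 1, (hmem k y).2 hy⟩⟩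
  obtain ⟨N, hN⟩ := hU E hrange
  apply hproper N
  rw [← hlearn N, ← hEp (N + 1)]
  exact hN _ (hlen (N + 1) |>.trans' N.le_succ)

end GoldTheorem

namespace Language

variable {α : Type*}

theorem isRegular_setOf_length_le (k : ℕ) : IsRegular {w : List α | w.length ≤ k} := by
  refine .of_finite_range_leftQuotient <|
    ((Set.finite_Iic (k + 1)).image fun i => {y : List α | i + y.length ≤ k}).subset ?_
  rintro _ ⟨x, rfl⟩
  refine ⟨min x.length (k + 1), by simp, ?_⟩
  ext y
  change min x.length (k + 1) + y.length ≤ k ↔ (x ++ y).length ≤ k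
  rw [List.length_append]
  omega

theorem isRegular_univ : IsRegular (Set.univ : Set (List α)) :=
  ⟨Unit, inferInstance, ⟨fun _ _ => (), (), Set.univ⟩, Set.eq_univ_of_forall fun _ => trivial⟩

end Language

theorem iUnion_setOf_length_le {α : Type*} : ⋃ k, {w : List α | w.length ≤ k} = Set.univ :=
  Set.eq_univ_of_forall fun w => Set.mem_iUnion.2 ⟨w.length, le_refl w.length⟩

/-- the class of regular languages over a two-letter alphabet is
not identifiable in the limit from positive examples: for every learner there
is a regular language and a positive presentation of it on which the learner
does not converge to the language. -/
theorem stmt_7 :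
    ∀ learner : List (List (Fin 2)) → Set (List (Fin 2)),
      ∃ (L : Set (List (Fin 2))) (E : ℕ → List (Fin 2)),
        (∃ (σ : Type) (_ : Fintype σ) (M : DFA (Fin 2) σ),
            (M.accepts : Set (List (Fin 2))) = L) ∧
        Set.range E = L ∧
        ¬ ∃ N : ℕ, ∀ n ≥ N, learner ((List.range n).map E) = L := by
  intro learner
  by_contra! h
  have hid (L : Language (Fin 2)) (hL : L.IsRegular) : IdentifiesInTheLimit learner L :=
    fun E hE => h L E hL hE
  refine not_identifiesInTheLimit_iUnion (L := fun k => {w : List (Fin 2) | w.length ≤ k})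
    (fun j k hjk w hw => le_trans hw hjk) (fun k => List.finite_length_le _ k)
    (fun k => ⟨[], Nat.zero_le k⟩) (fun k hk => ?_)
    (fun k => hid _ (Language.isRegular_setOf_length_le k)) ?_
  · have : List.replicate (k + 1) 0 ∈ {w : List (Fin 2) | w.length ≤ k} := by
      rw [hk, iUnion_setOf_length_le]; trivial
    simp at this
  · rw [iUnion_setOf_length_le]
    exact hid _ Language.isRegular_univ
end
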